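/- arXiv:1810.04798 — 2 statements merged into one kernel-verified Lean document; each statement's English description precedes it below -/
import Mathlib

section
/- Let A be an associative k-algebra and let Der(A)^♮ denote the set of derivations of A whose image lies in k·1 + [A,A]. Then Der(A)^♮ is a Lie ideal of the Lie algebra Der(A) of all derivations of A under the commutator bracket; hence Der(A)/Der(A)^♮ is a Lie algebra. -/
/-- The k-linear span of all commutators `a*b - b*a` in an associative algebra. -/
def commSpan (k : Type*) [Field k] (A : Type*) [Ring A] [Algebra k A] :
    Submodule k A :=
  Submodule.span k {x : A | ∃ a b : A, x = a * b - b * a}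

/-- The subspace `k·1 + [A,A]` of a unital associative algebra. -/
def natSub (k : Type*) [Field k] (A : Type*) [Ring A] [Algebra k A] :
    Submodule k A :=
  Submodule.span k {(1 : A)} ⊔ commSpan k A

/- STATEMENT 5: The derivations of `A` with image in `k·1 + [A,A]` form a Lie
ideal of `Der(A)` under the commutator bracket: if `D₂` is such a derivation and
`D₁` any derivation, then `[D₁,D₂] = D₁∘D₂ - D₂∘D₁` is again a derivation with
image in `k·1 + [A,A]`. -/
theorem stmt5
    (k : Type*) [Field k]
    (A : Type*) [Ring A] [Algebra k A]
    (D₁ D₂ : A →ₗ[k] A)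
    (hD₁ : ∀ a b : A, D₁ (a * b) = D₁ a * b + a * D₁ b)
    (hD₂ : ∀ a b : A, D₂ (a * b) = D₂ a * b + a * D₂ b)
    (hIm : ∀ a : A, D₂ a ∈ natSub k A) :
    (∀ a b : A, (D₁ ∘ₗ D₂ - D₂ ∘ₗ D₁) (a * b)
        = (D₁ ∘ₗ D₂ - D₂ ∘ₗ D₁) a * b + a * (D₁ ∘ₗ D₂ - D₂ ∘ₗ D₁) b) ∧
    (∀ a : A, (D₁ ∘ₗ D₂ - D₂ ∘ₗ D₁) a ∈ natSub k A) := by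
  constructor
  · intro a b
    simp only [LinearMap.sub_apply, LinearMap.comp_apply, hD₁, hD₂, map_add]
    noncomm_ring
  · intro a
    have hinv : ∀ x ∈ natSub k A, D₁ x ∈ natSub k A := by
      have h1 : D₁ (1 : A) = 0 := by
        have := hD₁ 1 1
        have h : D₁ 1 = D₁ 1 + D₁ 1 := by simpa using this
        exact left_eq_add.mp h
      intro x hx
      rw [natSub, commSpan, ← Submodule.span_union] at hx
      refine Submodule.span_induction (p := fun x _ => D₁ x ∈ natSub k A) ?_ ?_ ?_ ?_ hx
      · rintro y (rfl | ⟨c, d, rfl⟩)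
        · rw [h1]; exact Submodule.zero_mem _
        · have : D₁ (c * d - d * c)
              = (D₁ c * d - d * D₁ c) + (c * D₁ d - D₁ d * c) := by
            rw [map_sub, hD₁, hD₁]; noncomm_ring
          rw [this]
          refine Submodule.add_mem _ ?_ ?_ <;>
            exact Submodule.mem_sup_right (Submodule.subset_span ⟨_, _, rfl⟩)
      · simp
      · intro y z _ _ hy hz
        rw [map_add]; exact Submodule.add_mem _ hy hz
      · intro c y _ hy
        rw [map_smul]; exact Submodule.smul_mem _ _ hy
    simp only [LinearMap.sub_apply, LinearMap.comp_apply]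
    exact Submodule.sub_mem _ (hinv _ (hIm a)) (hIm (D₁ a))
end

section
/- Let V be a k-vector space with a bilinear pairing ⟨-,-⟩ : V × V → k, and let R = T_k(V) be the tensor algebra. Define a bilinear operation {{-,-}} on R by {{(v_1,…,v_n),(w_1,…,w_m)}} = ∑_{i,j} ⟨v_i,w_j⟩ (w_1,…,w_{j-1},v_{i+1},…,v_n) ⊗ (v_1,…,v_{i-1},w_{j+1},…,w_m), extended by {{r,1}} = {{1,r}} = 0, where (u_1,…,u_p) denotes u_1 ⊗ ⋯ ⊗ u_p ∈ T_kV. Then for all a, b, c ∈ R, {{a, bc}} = {{a,b}}(1⊗c) + (b⊗1){{a,c}}, where R⊗R carries the outer R-bimodule structure; i.e., {{a,−}} is a derivation R → R⊗R. -/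
/-!
Both sides are linear in each of `a`, `b`, `c`, and the monomials `prodGen k V l` span
`T_k V`, so it suffices to treat `a`, `b`, `c` monomials. For `b = (w₁,…,w_m)` and
`c = (u₁,…,u_p)` the inner sum defining `{{a, bc}}` runs over the positions of the
concatenation `(w₁,…,w_m,u₁,…,u_p)`: the positions in `b` give `{{a,b}}(1 ⊗ c)` and those
in `c` give `(b ⊗ 1){{a,c}}`.
-/

open TensorProduct

/-- The monomial `v₁ ⊗ ⋯ ⊗ vₙ` in the tensor algebra associated to a list of
elements of `V`. -/
noncomputable def prodGen (k : Type*) [Field k] (V : Type*) [AddCommGroup V]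
    [Module k V] (l : List V) : TensorAlgebra k V :=
  (l.map (TensorAlgebra.ι k)).prod

section

variable (k : Type*) [Field k] (V : Type*) [AddCommGroup V] [Module k V]

lemma prodGen_cons (v : V) (l : List V) :
    prodGen k V (v :: l) = TensorAlgebra.ι k v * prodGen k V l := by
  simp [prodGen]

lemma prodGen_append (l₁ l₂ : List V) :
    prodGen k V (l₁ ++ l₂) = prodGen k V l₁ * prodGen k V l₂ := by
  simp [prodGen]

lemma span_range_prodGen : Submodule.span k (Set.range (prodGen k V)) = ⊤ := by
  have hclosure : (Submonoid.closure (Set.range (TensorAlgebra.ι k (M := V))) : Set _) ⊆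
      Set.range (prodGen k V) := by
    intro x hx
    induction hx using Submonoid.closure_induction_left with
    | one => exact ⟨[], rfl⟩
    | mul_left _ hv _ _ ih =>
      obtain ⟨v, rfl⟩ := hv
      obtain ⟨l, rfl⟩ := ih
      exact ⟨v :: l, prodGen_cons k V v l⟩
  rw [eq_top_iff, ← Algebra.top_toSubmodule, ← TensorAlgebra.adjoin_range_ι,
    Algebra.adjoin_eq_span]
  exact Submodule.span_mono hclosure

variable {k V} {M : Type*} [AddCommGroup M] [Module k M]

lemma LinearMap.ext_prodGen {f g : TensorAlgebra k V →ₗ[k] M}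
    (h : ∀ l, f (prodGen k V l) = g (prodGen k V l)) : f = g :=
  LinearMap.ext_on_range (span_range_prodGen k V) h

def IsNecklaceBracket (B : V →ₗ[k] V →ₗ[k] k)
    (DB : TensorAlgebra k V →ₗ[k] TensorAlgebra k V →ₗ[k]
      (TensorAlgebra k V ⊗[k] TensorAlgebra k V)) : Prop :=
  ∀ vs ws : List V,
    DB (prodGen k V vs) (prodGen k V ws)
      = ∑ i : Fin vs.length, ∑ j : Fin ws.length,
          B (vs.get i) (ws.get j) •
            (prodGen k V (ws.take j ++ vs.drop (i + 1)) ⊗ₜ[k]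
              prodGen k V (vs.take i ++ ws.drop (j + 1)))

namespace IsNecklaceBracket

variable {B : V →ₗ[k] V →ₗ[k] k}
  {DB : TensorAlgebra k V →ₗ[k] TensorAlgebra k V →ₗ[k]
    (TensorAlgebra k V ⊗[k] TensorAlgebra k V)}

lemma leibniz_prodGen_prodGen_prodGen (h : IsNecklaceBracket B DB) (vs ws us : List V) :
    DB (prodGen k V vs) (prodGen k V ws * prodGen k V us)
      = DB (prodGen k V vs) (prodGen k V ws) * (1 ⊗ₜ[k] prodGen k V us)
        + (prodGen k V ws ⊗ₜ[k] 1) * DB (prodGen k V vs) (prodGen k V us) := by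
  rw [← prodGen_append, h, h, h, Finset.sum_mul, Finset.mul_sum, ← Finset.sum_add_distrib]
  refine Finset.sum_congr rfl fun i _ => ?_
  rw [Finset.sum_mul, Finset.mul_sum, ← Fin.sum_congr' _ List.length_append.symm,
    Fin.sum_univ_add]
  -- a position `j` of `ws ++ us` lies either in `ws` or in `us`
  congr 1
  · refine Finset.sum_congr rfl fun j _ => ?_
    have hj : (j : ℕ) < ws.length := j.isLt
    rw [smul_mul_assoc, Algebra.TensorProduct.tmul_mul_tmul, mul_one,
      ← prodGen_append, List.append_assoc]
    simp only [Fin.val_cast, Fin.val_castAdd, List.get_eq_getElem]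
    rw [List.getElem_append_left hj, List.take_append_of_le_length hj.le,
      List.drop_append_of_le_length hj]
  · refine Finset.sum_congr rfl fun j _ => ?_
    rw [mul_smul_comm, Algebra.TensorProduct.tmul_mul_tmul, one_mul,
      ← prodGen_append, ← List.append_assoc]
    simp only [Fin.val_cast, Fin.val_natAdd, List.get_eq_getElem]
    rw [List.getElem_append_right (Nat.le_add_right _ _)]
    simp only [Nat.add_sub_cancel_left, List.take_append, Nat.add_assoc, List.drop_append]
    simp [List.take_of_length_le, List.drop_of_length_le]

lemma leibniz_prodGen_prodGen (h : IsNecklaceBracket B DB) (vs ws : List V)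
    (c : TensorAlgebra k V) :
    DB (prodGen k V vs) (prodGen k V ws * c)
      = DB (prodGen k V vs) (prodGen k V ws) * (1 ⊗ₜ[k] c)
        + (prodGen k V ws ⊗ₜ[k] 1) * DB (prodGen k V vs) c := by
  have := LinearMap.ext_prodGen
    (f := DB (prodGen k V vs) ∘ₗ LinearMap.mulLeft k (prodGen k V ws))
    (g := LinearMap.mulLeft k (DB (prodGen k V vs) (prodGen k V ws)) ∘ₗ mk k _ _ 1
      + LinearMap.mulLeft k (prodGen k V ws ⊗ₜ[k] 1) ∘ₗ DB (prodGen k V vs))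
    (h.leibniz_prodGen_prodGen_prodGen vs ws)
  exact LinearMap.congr_fun this c

lemma leibniz_prodGen (h : IsNecklaceBracket B DB) (vs : List V) (b c : TensorAlgebra k V) :
    DB (prodGen k V vs) (b * c)
      = DB (prodGen k V vs) b * (1 ⊗ₜ[k] c) + (b ⊗ₜ[k] 1) * DB (prodGen k V vs) c := by
  have := LinearMap.ext_prodGen
    (f := DB (prodGen k V vs) ∘ₗ LinearMap.mulRight k c)
    (g := LinearMap.mulRight k (1 ⊗ₜ[k] c) ∘ₗ DB (prodGen k V vs)
      + LinearMap.mulRight k (DB (prodGen k V vs) c) ∘ₗ (mk k _ _).flip 1)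
    (h.leibniz_prodGen_prodGen vs · c)
  exact LinearMap.congr_fun this b

lemma leibniz (h : IsNecklaceBracket B DB) (a b c : TensorAlgebra k V) :
    DB a (b * c) = DB a b * (1 ⊗ₜ[k] c) + (b ⊗ₜ[k] 1) * DB a c := by
  have := LinearMap.ext_prodGen
    (f := DB.flip (b * c))
    (g := LinearMap.mulRight k (1 ⊗ₜ[k] c) ∘ₗ DB.flip b
      + LinearMap.mulLeft k (b ⊗ₜ[k] 1) ∘ₗ DB.flip c)
    (h.leibniz_prodGen · b c)
  exact LinearMap.congr_fun this a

end IsNecklaceBracket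

end

theorem stmt6_general
    (k : Type*) [Field k]
    (V : Type*) [AddCommGroup V] [Module k V]
    (B : V →ₗ[k] V →ₗ[k] k)
    (DB : TensorAlgebra k V →ₗ[k] TensorAlgebra k V →ₗ[k]
      (TensorAlgebra k V ⊗[k] TensorAlgebra k V))
    (hform : ∀ vs ws : List V,
      DB (prodGen k V vs) (prodGen k V ws)
        = ∑ i : Fin vs.length, ∑ j : Fin ws.length,
            B (vs.get i) (ws.get j) •
              (prodGen k V (ws.take j ++ vs.drop (i + 1)) ⊗ₜ[k]
                prodGen k V (vs.take i ++ ws.drop (j + 1)))) :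
    ∀ a b c : TensorAlgebra k V,
      DB a (b * c)
        = DB a b * ((1 : TensorAlgebra k V) ⊗ₜ[k] c)
          + (b ⊗ₜ[k] (1 : TensorAlgebra k V)) * DB a c :=
  IsNecklaceBracket.leibniz hform

theorem stmt6
    (k : Type*) [Field k]
    (V : Type*) [AddCommGroup V] [Module k V]
    (B : V →ₗ[k] V →ₗ[k] k)
    (DB : TensorAlgebra k V →ₗ[k] TensorAlgebra k V →ₗ[k]
      (TensorAlgebra k V ⊗[k] TensorAlgebra k V))
    (hone : ∀ r : TensorAlgebra k V, DB r 1 = 0 ∧ DB 1 r = 0)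
    (hform : ∀ vs ws : List V,
      DB (prodGen k V vs) (prodGen k V ws)
        = ∑ i : Fin vs.length, ∑ j : Fin ws.length,
            B (vs.get i) (ws.get j) •
              (prodGen k V (ws.take j ++ vs.drop (i + 1)) ⊗ₜ[k]
                prodGen k V (vs.take i ++ ws.drop (j + 1)))) :
    ∀ a b c : TensorAlgebra k V,
      DB a (b * c)
        = DB a b * ((1 : TensorAlgebra k V) ⊗ₜ[k] c)
          + (b ⊗ₜ[k] (1 : TensorAlgebra k V)) * DB a c :=
  stmt6_general k V B DB hform
end
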